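/- Theorem 4.2, case B2. In addition to the common setup, assume b11 = b12, σ11 = σ12, b21 = b22, σ21 = σ22, and K₁ := K_{11} = K_{12} < K_{21} = K_{22} =: K₂; assume c12 < 0, c21 > 0, χ12 > 0, χ21 > 0 and c12 + c21 > 0 (Condition B2). Then the quadruple v11(x) = K₂·x^γ − c12, v12(x) = K₂·x^γ − c12, v21(x) = K₂·x^γ, v22(x) = K₂·x^γ solves the QVI system at every x > 0. -/

import Mathlib

/-!
Each candidate is `K₂ x^γ` minus a constant `c`, and the generator sends `x^γ` to
`(bγ + σ²γ(γ-1)/2) x^γ`, so the HJB term is `r v - L v - x^γ = (K₂ D - 1) x^γ - r c` with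
`D = r - bγ + σ²γ(1-γ)/2`. In regime 2 we have `K₂ D₂ = 1` and `c = 0`, so the HJB term vanishes
while the switching terms are `c12 + c21 > 0` and `-χ < 0`. In regime 1, `K₂ > K₁ = 1/D₁` and
`c12 < 0` make the HJB term positive, and the switch to regime 2 is exactly active.
-/

/-- Generator of a one-dimensional geometric Brownian motion with drift `b` and
volatility `σ`: `(L v)(x) = (1/2)σ²x²v''(x) + b x v'(x)`. -/
noncomputable def Lop (b σ : ℝ) (v : ℝ → ℝ) (x : ℝ) : ℝ :=
  (1/2) * σ^2 * x^2 * deriv (deriv v) x + b * x * deriv v x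

/-- The quadruple `(v11, v12, v21, v22)` solves the Isaacs system of
quasi-variational inequalities at the point `x`, with profit `f(x) = x^γ`. -/
def solvesQVI (r γ c12 c21 χ12 χ21 b11 σ11 b12 σ12 b21 σ21 b22 σ22 : ℝ)
    (v11 v12 v21 v22 : ℝ → ℝ) (x : ℝ) : Prop :=
  max (min (r * v11 x - Lop b11 σ11 v11 x - x ^ γ) (v11 x - (v21 x - c12)))
      (v11 x - (v12 x + χ12)) = 0 ∧
  max (min (r * v12 x - Lop b12 σ12 v12 x - x ^ γ) (v12 x - (v22 x - c12)))
      (v12 x - (v11 x + χ21)) = 0 ∧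
  max (min (r * v21 x - Lop b21 σ21 v21 x - x ^ γ) (v21 x - (v11 x - c21)))
      (v21 x - (v22 x + χ12)) = 0 ∧
  max (min (r * v22 x - Lop b22 σ22 v22 x - x ^ γ) (v22 x - (v12 x - c21)))
      (v22 x - (v21 x + χ21)) = 0

lemma Lop_sub_const (b σ c : ℝ) (v : ℝ → ℝ) (x : ℝ) :
    Lop b σ (fun y => v y - c) x = Lop b σ v x := by
  simp only [Lop, deriv_sub_const_fun]

lemma Lop_const_mul_rpow (b σ K p : ℝ) {x : ℝ} (hx : 0 < x) :
    Lop b σ (fun y => K * y ^ p) x = K * (b * p + (1/2) * σ^2 * p * (p - 1)) * x ^ p := by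
  simp only [Lop, deriv_const_mul_field', deriv_const_mul_field, Real.deriv_rpow_const,
    Real.rpow_sub_one hx.ne']
  field_simp
  ring

lemma hjb_residual_const_mul_rpow_sub_const (r b σ K c γ : ℝ) {x : ℝ} (hx : 0 < x) :
    r * (K * x ^ γ - c) - Lop b σ (fun y => K * y ^ γ - c) x - x ^ γ
      = (K * (r - b*γ + (1/2)*σ^2*γ*(1-γ)) - 1) * x ^ γ - r * c := by
  rw [Lop_sub_const, Lop_const_mul_rpow b σ K γ hx]
  ring

lemma max_min_eq_zero_of_right_eq_zero {α : Type*} [LinearOrder α] [Zero α] {a b c : α}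
    (ha : 0 ≤ a) (hb : b = 0) (hc : c ≤ 0) : max (min a b) c = 0 := by
  rw [hb, min_eq_right ha, max_eq_left hc]

lemma max_min_eq_zero_of_left_eq_zero {α : Type*} [LinearOrder α] [Zero α] {a b c : α}
    (ha : a = 0) (hb : 0 ≤ b) (hc : c ≤ 0) : max (min a b) c = 0 := by
  rw [ha, min_eq_left hb, max_eq_left hc]

theorem thm4_2_B2_general
    (r γ c12 c21 χ12 χ21 : ℝ)
    (b11 σ11 b12 σ12 b21 σ21 b22 σ22 : ℝ)
    (K11 K21 : ℝ)
    (hr : 0 < r)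
    (hd11 : 0 < r - b11*γ + (1/2)*σ11^2*γ*(1-γ))
    (hd21 : 0 < r - b21*γ + (1/2)*σ21^2*γ*(1-γ))
    (hK11 : K11 = 1/(r - b11*γ + (1/2)*σ11^2*γ*(1-γ)))
    (hK21 : K21 = 1/(r - b21*γ + (1/2)*σ21^2*γ*(1-γ)))
    (heqb12 : b12 = b11) (heqσ12 : σ12 = σ11)
    (heqb22 : b22 = b21) (heqσ22 : σ22 = σ21)
    (K₁ K₂ : ℝ) (hK₁ : K₁ = K11) (hK₂ : K₂ = K21)
    (hKlt : K₁ < K₂)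
    (hc12 : c12 < 0) (hχ12 : 0 < χ12) (hχ21 : 0 < χ21)
    (hcsum : 0 < c12 + c21)
    :
    ∀ x : ℝ, 0 < x →
      solvesQVI r γ c12 c21 χ12 χ21 b11 σ11 b12 σ12 b21 σ21 b22 σ22
        (fun y => K₂ * y ^ γ - c12)
        (fun y => K₂ * y ^ γ - c12)
        (fun y => K₂ * y ^ γ)
        (fun y => K₂ * y ^ γ) x := by
  intro x hx
  have hK₂D₂ : K₂ * (r - b21*γ + (1/2)*σ21^2*γ*(1-γ)) = 1 := by
    rw [hK₂, hK21, one_div_mul_cancel hd21.ne']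
  have hK₂D₁ : 1 < K₂ * (r - b11*γ + (1/2)*σ11^2*γ*(1-γ)) := by
    rw [hK₁, hK11] at hKlt
    exact (div_lt_iff₀ hd11).mp hKlt
  have hres₁ : 0 ≤ r * (K₂ * x ^ γ - c12) - Lop b11 σ11 (fun y => K₂ * y ^ γ - c12) x - x ^ γ := by
    rw [hjb_residual_const_mul_rpow_sub_const r b11 σ11 K₂ c12 γ hx]
    have := mul_pos (sub_pos.2 hK₂D₁) (Real.rpow_pos_of_pos hx γ)
    linarith [mul_neg_of_pos_of_neg hr hc12]
  have hres₂ : r * (K₂ * x ^ γ) - Lop b21 σ21 (fun y => K₂ * y ^ γ) x - x ^ γ = 0 := by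
    rw [Lop_const_mul_rpow b21 σ21 K₂ γ hx]
    linear_combination x ^ γ * hK₂D₂
  rw [solvesQVI, heqb12, heqσ12, heqb22, heqσ22]
  refine ⟨?_, ?_, ?_, ?_⟩
  · exact max_min_eq_zero_of_right_eq_zero hres₁ (by ring) (by linarith)
  · exact max_min_eq_zero_of_right_eq_zero hres₁ (by ring) (by linarith)
  · exact max_min_eq_zero_of_left_eq_zero hres₂ (by linarith) (by linarith)
  · exact max_min_eq_zero_of_left_eq_zero hres₂ (by linarith) (by linarith)

theorem thm4_2_B2
    (r γ c12 c21 χ12 χ21 : ℝ)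
    (b11 σ11 b12 σ12 b21 σ21 b22 σ22 : ℝ)
    (K11 K12 K21 K22 : ℝ)
    (hr : 0 < r) (hγ0 : 0 < γ) (hγ1 : γ < 1)
    (hσ11 : 0 < σ11) (hσ12 : 0 < σ12) (hσ21 : 0 < σ21) (hσ22 : 0 < σ22)
    (hd11 : 0 < r - b11*γ + (1/2)*σ11^2*γ*(1-γ))
    (hd12 : 0 < r - b12*γ + (1/2)*σ12^2*γ*(1-γ))
    (hd21 : 0 < r - b21*γ + (1/2)*σ21^2*γ*(1-γ))
    (hd22 : 0 < r - b22*γ + (1/2)*σ22^2*γ*(1-γ))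
    (hrb11 : b11 < r) (hrb12 : b12 < r) (hrb21 : b21 < r) (hrb22 : b22 < r)
    (hK11 : K11 = 1/(r - b11*γ + (1/2)*σ11^2*γ*(1-γ)))
    (hK12 : K12 = 1/(r - b12*γ + (1/2)*σ12^2*γ*(1-γ)))
    (hK21 : K21 = 1/(r - b21*γ + (1/2)*σ21^2*γ*(1-γ)))
    (hK22 : K22 = 1/(r - b22*γ + (1/2)*σ22^2*γ*(1-γ)))
    (heqb12 : b12 = b11) (heqσ12 : σ12 = σ11)
    (heqb22 : b22 = b21) (heqσ22 : σ22 = σ21)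
    (K₁ K₂ : ℝ) (hK₁ : K₁ = K11) (hK₂ : K₂ = K21)
    (hKlt : K₁ < K₂)
    (hc12 : c12 < 0) (hc21 : 0 < c21) (hχ12 : 0 < χ12) (hχ21 : 0 < χ21)
    (hcsum : 0 < c12 + c21)
    :
    ∀ x : ℝ, 0 < x →
      solvesQVI r γ c12 c21 χ12 χ21 b11 σ11 b12 σ12 b21 σ21 b22 σ22
        (fun y => K₂ * y ^ γ - c12)
        (fun y => K₂ * y ^ γ - c12)
        (fun y => K₂ * y ^ γ)
        (fun y => K₂ * y ^ γ) x :=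
  thm4_2_B2_general r γ c12 c21 χ12 χ21 b11 σ11 b12 σ12 b21 σ21 b22 σ22 K11 K21 hr hd11 hd21 hK11
    hK21 heqb12 heqσ12 heqb22 heqσ22 K₁ K₂ hK₁ hK₂ hKlt hc12 hχ12 hχ21 hcsum
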